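/- arXiv:2303.10669 — 6 statements merged into one kernel-verified Lean document; each statement's English description precedes it below -/
import Mathlib

section
/- Let γ > 0, λ₁ > 0, λ ≥ λ₁, α ∈ (0,1), t₀ ≥ 1, and define f(ξ, t₀, α) = -ξ t₀^{α-1} + λ γ ξ^α cos(απ) + λ t₀^α. Suppose c₀ > 0 satisfies: if γ + 1/λ₁ < 1/2 then 1 < c₀ and c₀ < (1/2)(γ + 1/λ₁)^{-1}; if γ + 1/λ₁ ≥ 1/2 then c₀ < 1 and c₀^α < (1/2)(γ + 1/λ₁)^{-1}. Then for all ξ with 0 ≤ ξ ≤ c₀ t₀, one has (1/2) λ t₀^α ≤ f(ξ, t₀, α) ≤ (3/2) λ t₀^α. -/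
open Real Set

/-- Two-sided estimate for
`f(ξ, t₀, α) = -ξ t₀^(α-1) + λγ ξ^α cos(απ) + λ t₀^α` when `0 ≤ ξ ≤ c₀ t₀`. -/
theorem f_estimate (γ lam1 lam α t₀ c₀ ξ : ℝ)
    (hγ : 0 < γ) (hlam1 : 0 < lam1) (hlam : lam1 ≤ lam) (hα : α ∈ Ioo (0:ℝ) 1)
    (ht₀ : 1 ≤ t₀) (hc₀ : 0 < c₀)
    (hcase1 : γ + 1 / lam1 < 1 / 2 → 1 < c₀ ∧ c₀ < (1 / 2) * (γ + 1 / lam1)⁻¹)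
    (hcase2 : 1 / 2 ≤ γ + 1 / lam1 → c₀ < 1 ∧ c₀ ^ α < (1 / 2) * (γ + 1 / lam1)⁻¹)
    (hξ0 : 0 ≤ ξ) (hξ : ξ ≤ c₀ * t₀) :
    (1 / 2) * lam * t₀ ^ α ≤
      -ξ * t₀ ^ (α - 1) + lam * γ * ξ ^ α * Real.cos (α * π) + lam * t₀ ^ α ∧
    -ξ * t₀ ^ (α - 1) + lam * γ * ξ ^ α * Real.cos (α * π) + lam * t₀ ^ α ≤
      (3 / 2) * lam * t₀ ^ α := by
  obtain ⟨hα0, hα1⟩ := hα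
  have ht0 : (0:ℝ) < t₀ := lt_of_lt_of_le one_pos ht₀
  have hlam0 : 0 < lam := lt_of_lt_of_le hlam1 hlam
  have hT : (0:ℝ) < t₀ ^ α := Real.rpow_pos_of_pos ht0 α
  have hpos : (0:ℝ) < γ + 1 / lam1 := by positivity
  have hca0 : (0:ℝ) < c₀ ^ α := Real.rpow_pos_of_pos hc₀ α
  have hdiv : 1 / lam ≤ 1 / lam1 := one_div_le_one_div_of_le hlam1 hlam
  -- key inequality
  have hkey : c₀ + lam * γ * c₀ ^ α ≤ lam / 2 := by
    have hhalf : c₀ / lam + γ * c₀ ^ α ≤ 1 / 2 := by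
      rcases lt_or_ge (γ + 1 / lam1) (1 / 2) with h | h
      · obtain ⟨h1, h2⟩ := hcase1 h
        have hca : c₀ ^ α ≤ c₀ := by
          calc c₀ ^ α ≤ c₀ ^ (1:ℝ) :=
                Real.rpow_le_rpow_of_exponent_le h1.le hα1.le
            _ = c₀ := Real.rpow_one c₀
        have h2' : c₀ * (γ + 1 / lam1) < 1 / 2 := by
          have := mul_lt_mul_of_pos_right h2 hpos
          rw [mul_assoc, inv_mul_cancel₀ hpos.ne'] at this
          linarith
        have h3 : c₀ / lam ≤ c₀ * (1 / lam1) := by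
          have := mul_le_mul_of_nonneg_left hdiv hc₀.le
          simpa [div_eq_mul_inv, one_div] using this
        nlinarith [mul_le_mul_of_nonneg_left hca hγ.le]
      · obtain ⟨h1, h2⟩ := hcase2 h
        have hca : c₀ ≤ c₀ ^ α := by
          calc c₀ = c₀ ^ (1:ℝ) := (Real.rpow_one c₀).symm
            _ ≤ c₀ ^ α := Real.rpow_le_rpow_of_exponent_ge hc₀ h1.le hα1.le
        have h2' : c₀ ^ α * (γ + 1 / lam1) < 1 / 2 := by
          have := mul_lt_mul_of_pos_right h2 hpos
          rw [mul_assoc, inv_mul_cancel₀ hpos.ne'] at this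
          linarith
        have h3 : c₀ / lam ≤ c₀ ^ α * (1 / lam1) := by
          have h4 : c₀ / lam ≤ c₀ * (1 / lam1) := by
            have := mul_le_mul_of_nonneg_left hdiv hc₀.le
            simpa [div_eq_mul_inv, one_div] using this
          have h5 : c₀ * (1 / lam1) ≤ c₀ ^ α * (1 / lam1) :=
            mul_le_mul_of_nonneg_right hca (by positivity)
          linarith
        nlinarith
    have hc : lam * (c₀ / lam) = c₀ := by field_simp
    nlinarith [mul_le_mul_of_nonneg_left hhalf hlam0.le]
  -- bounds on the two perturbation terms
  have hξT : ξ * t₀ ^ (α - 1) ≤ c₀ * t₀ ^ α := by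
    have h1 : ξ * t₀ ^ (α - 1) ≤ c₀ * t₀ * t₀ ^ (α - 1) :=
      mul_le_mul_of_nonneg_right hξ (Real.rpow_nonneg ht0.le _)
    have h2 : t₀ * t₀ ^ (α - 1) = t₀ ^ α := by
      rw [show t₀ * t₀ ^ (α - 1) = t₀ ^ (1:ℝ) * t₀ ^ (α - 1) by rw [Real.rpow_one],
        ← Real.rpow_add ht0]
      norm_num
    calc ξ * t₀ ^ (α - 1) ≤ c₀ * t₀ * t₀ ^ (α - 1) := h1
      _ = c₀ * (t₀ * t₀ ^ (α - 1)) := by ring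
      _ = c₀ * t₀ ^ α := by rw [h2]
  have hξα : ξ ^ α ≤ c₀ ^ α * t₀ ^ α := by
    calc ξ ^ α ≤ (c₀ * t₀) ^ α := Real.rpow_le_rpow hξ0 hξ hα0.le
      _ = c₀ ^ α * t₀ ^ α := Real.mul_rpow hc₀.le ht0.le
  have hcos1 : Real.cos (α * π) ≤ 1 := Real.cos_le_one _
  have hcos2 : -1 ≤ Real.cos (α * π) := Real.neg_one_le_cos _
  have hξα0 : (0:ℝ) ≤ ξ ^ α := Real.rpow_nonneg hξ0 α
  have hξT0 : (0:ℝ) ≤ ξ * t₀ ^ (α - 1) :=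
    mul_nonneg hξ0 (Real.rpow_nonneg ht0.le _)
  have hgl : (0:ℝ) ≤ lam * γ := by positivity
  have hprod : lam * γ * ξ ^ α ≤ lam * γ * (c₀ ^ α * t₀ ^ α) :=
    mul_le_mul_of_nonneg_left hξα hgl
  have hP0 : (0:ℝ) ≤ lam * γ * ξ ^ α := mul_nonneg hgl hξα0
  have hcosmul1 : lam * γ * ξ ^ α * Real.cos (α * π) ≤ lam * γ * ξ ^ α := by
    have := mul_le_mul_of_nonneg_left hcos1 hP0
    simpa using this
  have hcosmul2 : -(lam * γ * ξ ^ α) ≤ lam * γ * ξ ^ α * Real.cos (α * π) := by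
    have := mul_le_mul_of_nonneg_left hcos2 hP0
    simpa using this
  have hk2 : c₀ * t₀ ^ α + lam * γ * (c₀ ^ α * t₀ ^ α) ≤ lam / 2 * t₀ ^ α := by
    have := mul_le_mul_of_nonneg_right hkey hT.le
    rw [add_mul] at this
    linarith [this, mul_assoc (lam * γ) (c₀ ^ α) (t₀ ^ α)]
  constructor
  · linarith [hk2, hξT, hcosmul2, hprod]
  · linarith [hk2, hcosmul1, hprod, hξT0]
end

section
/- Under the same hypotheses (0 ≤ ξ ≤ c₀ t₀, t₀ ≥ 1, λ ≥ λ₁ > 0, γ > 0, α ∈ (0,1), c₀ as specified), the functions f and g satisfy (1/4)(λ t₀^α)² ≤ f(ξ, t₀, α)² + g(ξ, α)² ≤ (10/4)(λ t₀^α)². -/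
open Real Set

theorem fg_aux (A F G : ℝ) (hA : 0 < A) (h1 : (1 / 2) * A ≤ F) (h2 : F ≤ (3 / 2) * A)
    (h3 : G ^ 2 ≤ (1 / 4) * A ^ 2) :
    (1 / 4) * A ^ 2 ≤ F ^ 2 + G ^ 2 ∧ F ^ 2 + G ^ 2 ≤ (10 / 4) * A ^ 2 := by
  constructor <;> nlinarith [sq_nonneg G, sq_nonneg F]

set_option maxHeartbeats 2000000 in
/-- Two-sided estimate for `f² + g²` on `0 ≤ ξ ≤ c₀ t₀`. -/
theorem fg_estimate (γ lam1 lam α t₀ c₀ ξ : ℝ)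
    (hγ : 0 < γ) (hlam1 : 0 < lam1) (hlam : lam1 ≤ lam) (hα : α ∈ Ioo (0:ℝ) 1)
    (ht₀ : 1 ≤ t₀) (hc₀ : 0 < c₀)
    (hcase1 : γ + 1 / lam1 < 1 / 2 → 1 < c₀ ∧ c₀ < (1 / 2) * (γ + 1 / lam1)⁻¹)
    (hcase2 : 1 / 2 ≤ γ + 1 / lam1 → c₀ < 1 ∧ c₀ ^ α < (1 / 2) * (γ + 1 / lam1)⁻¹)
    (hξ0 : 0 ≤ ξ) (hξ : ξ ≤ c₀ * t₀) :
    (1 / 4) * (lam * t₀ ^ α) ^ 2 ≤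
      (-ξ * t₀ ^ (α - 1) + lam * γ * ξ ^ α * Real.cos (α * π) + lam * t₀ ^ α) ^ 2
        + (lam * γ * ξ ^ α * Real.sin (α * π)) ^ 2 ∧
    (-ξ * t₀ ^ (α - 1) + lam * γ * ξ ^ α * Real.cos (α * π) + lam * t₀ ^ α) ^ 2
        + (lam * γ * ξ ^ α * Real.sin (α * π)) ^ 2 ≤ (10 / 4) * (lam * t₀ ^ α) ^ 2 := by
  obtain ⟨hαpos, hαlt⟩ := hα
  have ht0pos : (0:ℝ) < t₀ := lt_of_lt_of_le one_pos ht₀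
  have hlampos : 0 < lam := lt_of_lt_of_le hlam1 hlam
  have hApos : 0 < t₀ ^ α := Real.rpow_pos_of_pos ht0pos α
  have hpos1 : 0 < γ + 1 / lam1 := by positivity
  have hinv : 1 / lam ≤ 1 / lam1 := one_div_le_one_div_of_le hlam1 hlam
  have hll : lam * (1 / lam) = 1 := by field_simp
  -- key inequality : c₀ + lam*γ*c₀^α ≤ lam/2
  have key : c₀ + lam * γ * c₀ ^ α ≤ lam / 2 := by
    rcases lt_or_ge (γ + 1 / lam1) (1 / 2) with h | h
    · obtain ⟨h1, h2⟩ := hcase1 h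
      have hca : c₀ ^ α ≤ c₀ := by
        have := Real.rpow_le_rpow_of_exponent_le h1.le hαlt.le
        rwa [Real.rpow_one] at this
      have h2' : c₀ * (γ + 1 / lam1) < 1 / 2 := by
        have := (mul_lt_mul_of_pos_right h2 hpos1)
        rwa [mul_assoc, inv_mul_cancel₀ (ne_of_gt hpos1), mul_one] at this
      nlinarith [mul_le_mul_of_nonneg_left hinv hc₀.le,
        mul_le_mul_of_nonneg_left hca (mul_nonneg hlampos.le hγ.le)]
    · obtain ⟨h1, h2⟩ := hcase2 h
      have hca : c₀ ≤ c₀ ^ α := by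
        have := Real.rpow_le_rpow_of_exponent_ge hc₀ h1.le hαlt.le
        rwa [Real.rpow_one] at this
      have h2' : c₀ ^ α * (γ + 1 / lam1) < 1 / 2 := by
        have := (mul_lt_mul_of_pos_right h2 hpos1)
        rwa [mul_assoc, inv_mul_cancel₀ (ne_of_gt hpos1), mul_one] at this
      have hcapos : 0 < c₀ ^ α := Real.rpow_pos_of_pos hc₀ α
      nlinarith [mul_le_mul_of_nonneg_left hinv hcapos.le]
  -- bounds on the pieces
  have ht : t₀ * t₀ ^ (α - 1) = t₀ ^ α := by
    have h := Real.rpow_add ht0pos 1 (α - 1)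
    rw [Real.rpow_one] at h
    have : (1 : ℝ) + (α - 1) = α := by ring
    rw [this] at h
    exact h.symm
  have hB1 : ξ * t₀ ^ (α - 1) ≤ c₀ * t₀ ^ α := by
    calc ξ * t₀ ^ (α - 1) ≤ (c₀ * t₀) * t₀ ^ (α - 1) :=
          mul_le_mul_of_nonneg_right hξ (Real.rpow_nonneg ht0pos.le _)
      _ = c₀ * (t₀ * t₀ ^ (α - 1)) := by ring
      _ = c₀ * t₀ ^ α := by rw [ht]
  have hB2 : ξ ^ α ≤ c₀ ^ α * t₀ ^ α := by
    calc ξ ^ α ≤ (c₀ * t₀) ^ α := Real.rpow_le_rpow hξ0 hξ hαpos.le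
      _ = c₀ ^ α * t₀ ^ α := Real.mul_rpow hc₀.le ht0pos.le
  have hξt : 0 ≤ ξ * t₀ ^ (α - 1) := mul_nonneg hξ0 (Real.rpow_nonneg ht0pos.le _)
  have hξα : 0 ≤ lam * γ * ξ ^ α :=
    mul_nonneg (mul_nonneg hlampos.le hγ.le) (Real.rpow_nonneg hξ0 α)
  -- B ≤ (lam/2) * t₀^α
  have hB : ξ * t₀ ^ (α - 1) + lam * γ * ξ ^ α ≤ (lam / 2) * t₀ ^ α := by
    have h2 : lam * γ * ξ ^ α ≤ lam * γ * (c₀ ^ α * t₀ ^ α) :=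
      mul_le_mul_of_nonneg_left hB2 (mul_nonneg hlampos.le hγ.le)
    nlinarith [mul_le_mul_of_nonneg_right key hApos.le]
  have hcos1 : Real.cos (α * π) ≤ 1 := Real.cos_le_one _
  have hcos2 : -1 ≤ Real.cos (α * π) := Real.neg_one_le_cos _
  have hsin : Real.sin (α * π) ^ 2 ≤ 1 := Real.sin_sq_le_one _
  have hgb : (lam * γ * ξ ^ α * Real.sin (α * π)) ^ 2 ≤ (lam * γ * ξ ^ α) ^ 2 := by
    nlinarith [sq_nonneg (lam * γ * ξ ^ α)]
  have hfl : lam * t₀ ^ α - (ξ * t₀ ^ (α - 1) + lam * γ * ξ ^ α)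
      ≤ -ξ * t₀ ^ (α - 1) + lam * γ * ξ ^ α * Real.cos (α * π) + lam * t₀ ^ α := by
    nlinarith
  have hfu : -ξ * t₀ ^ (α - 1) + lam * γ * ξ ^ α * Real.cos (α * π) + lam * t₀ ^ α
      ≤ lam * t₀ ^ α + (ξ * t₀ ^ (α - 1) + lam * γ * ξ ^ α) := by
    nlinarith
  have hApos' : 0 < lam * t₀ ^ α := mul_pos hlampos hApos
  have hs : lam * γ * ξ ^ α ≤ (1 / 2) * (lam * t₀ ^ α) := by linarith
  have hs2 : (lam * γ * ξ ^ α) ^ 2 ≤ ((1 / 2) * (lam * t₀ ^ α)) ^ 2 :=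
    pow_le_pow_left₀ hξα hs 2
  have hsq : ((1 / 2) * (lam * t₀ ^ α)) ^ 2 = (1 / 4) * (lam * t₀ ^ α) ^ 2 := by ring
  have hG2 : (lam * γ * ξ ^ α * Real.sin (α * π)) ^ 2 ≤ (1 / 4) * (lam * t₀ ^ α) ^ 2 := by
    linarith [hgb, hs2]
  exact fg_aux (lam * t₀ ^ α) _ _ hApos' (by linarith) (by linarith) hG2
end

section
/- Under the same hypotheses, the kernel density b_{α,1}(λ, t₀, ξ) = (1/π) · g(ξ, α) / (f(ξ, t₀, α)² + g(ξ, α)²) satisfies, for 0 ≤ ξ ≤ c₀ t₀: (4γ sin(απ)/(10π)) · ξ^α/(λ t₀^{2α}) ≤ b_{α,1}(λ, t₀, ξ) ≤ (4γ/π) · ξ^α/(λ t₀^{2α}). -/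
open Real Set

set_option maxHeartbeats 1000000 in
private lemma b_aux (p γ lam s c x b t : ℝ)
    (hp : 0 < p) (hγ : 0 < γ) (hlamp : 0 < lam) (hs0 : 0 < s) (hs1 : s ≤ 1)
    (hc1 : c ≤ 1) (hcm1 : -1 ≤ c) (hx : 0 ≤ x) (hb : 0 ≤ b) (ht : 0 < t)
    (hkey : x + lam * γ * b ≤ 1 / 2 * (lam * t)) :
    4 * γ * s / (10 * p) * (b / (lam * t ^ 2)) ≤
      1 / p * (lam * γ * b * s) /
        ((-(x) + lam * γ * b * c + lam * t) ^ 2 + (lam * γ * b * s) ^ 2) ∧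
    1 / p * (lam * γ * b * s) /
        ((-(x) + lam * γ * b * c + lam * t) ^ 2 + (lam * γ * b * s) ^ 2)
      ≤ 4 * γ / p * (b / (lam * t ^ 2)) := by
  have hP : 0 ≤ lam * γ * b := by positivity
  set F : ℝ := -(x) + lam * γ * b * c + lam * t with hF
  set G : ℝ := lam * γ * b * s with hG
  set T : ℝ := lam * t with hT
  have hTpos : 0 < T := by positivity
  have hGnn : 0 ≤ G := by
    rw [hG]; positivity
  have hFlo : T / 2 ≤ F := by
    have h1 := mul_le_mul_of_nonneg_left hcm1 hP
    rw [hF, hT]; nlinarith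
  have hFhi : F ≤ 3 / 2 * T := by
    have h1 := mul_le_mul_of_nonneg_left hc1 hP
    rw [hF, hT]; nlinarith
  have hGhi : G ≤ T / 2 := by
    have h1 := mul_le_mul_of_nonneg_left hs1 hP
    rw [hG, hT]; nlinarith
  have hD1 : T ^ 2 / 4 ≤ F ^ 2 + G ^ 2 := by nlinarith
  have hD2 : F ^ 2 + G ^ 2 ≤ 10 / 4 * T ^ 2 := by nlinarith
  have hDpos : 0 < F ^ 2 + G ^ 2 := by nlinarith
  constructor
  · have e1 : 1 / p * G / (10 / 4 * T ^ 2) ≤ 1 / p * G / (F ^ 2 + G ^ 2) := by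
      gcongr
    have e2 : 1 / p * G / (10 / 4 * T ^ 2)
        = 4 * γ * s / (10 * p) * (b / (lam * t ^ 2)) := by
      rw [hG, hT]
      field_simp
    linarith
  · have e1 : 1 / p * G / (F ^ 2 + G ^ 2) ≤ 1 / p * G / (T ^ 2 / 4) := by
      gcongr
    have e2 : 1 / p * G / (T ^ 2 / 4)
        = 4 * γ * s / p * (b / (lam * t ^ 2)) := by
      rw [hG, hT]
      field_simp
    have hq : 0 ≤ b / (lam * t ^ 2) := by positivity
    have h : 4 * γ * s / p ≤ 4 * γ / p := by
      rw [div_le_div_iff₀ hp hp]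
      nlinarith [mul_nonneg (mul_pos hγ hp).le (sub_nonneg.mpr hs1)]
    have e3 := mul_le_mul_of_nonneg_right h hq
    linarith

set_option maxHeartbeats 1000000 in
/-- Two-sided bound for the density `b_{α,1}(λ, t₀, ξ)` on `0 ≤ ξ ≤ c₀ t₀`. -/
theorem b_estimate_near (γ lam1 lam α t₀ c₀ ξ : ℝ)
    (hγ : 0 < γ) (hlam1 : 0 < lam1) (hlam : lam1 ≤ lam) (hα : α ∈ Ioo (0:ℝ) 1)
    (ht₀ : 1 ≤ t₀) (hc₀ : 0 < c₀)
    (hcase1 : γ + 1 / lam1 < 1 / 2 → 1 < c₀ ∧ c₀ < (1 / 2) * (γ + 1 / lam1)⁻¹)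
    (hcase2 : 1 / 2 ≤ γ + 1 / lam1 → c₀ < 1 ∧ c₀ ^ α < (1 / 2) * (γ + 1 / lam1)⁻¹)
    (hξ0 : 0 ≤ ξ) (hξ : ξ ≤ c₀ * t₀) :
    (4 * γ * Real.sin (α * π) / (10 * π)) * (ξ ^ α / (lam * t₀ ^ (2 * α))) ≤
      (1 / π) * (lam * γ * ξ ^ α * Real.sin (α * π)) /
        ((-ξ * t₀ ^ (α - 1) + lam * γ * ξ ^ α * Real.cos (α * π) + lam * t₀ ^ α) ^ 2
          + (lam * γ * ξ ^ α * Real.sin (α * π)) ^ 2) ∧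
    (1 / π) * (lam * γ * ξ ^ α * Real.sin (α * π)) /
        ((-ξ * t₀ ^ (α - 1) + lam * γ * ξ ^ α * Real.cos (α * π) + lam * t₀ ^ α) ^ 2
          + (lam * γ * ξ ^ α * Real.sin (α * π)) ^ 2)
      ≤ (4 * γ / π) * (ξ ^ α / (lam * t₀ ^ (2 * α))) := by
  have hπ : (0:ℝ) < π := Real.pi_pos
  have ht0p : (0:ℝ) < t₀ := lt_of_lt_of_le one_pos ht₀
  have hlamp : (0:ℝ) < lam := lt_of_lt_of_le hlam1 hlam
  have htα : (0:ℝ) < t₀ ^ α := Real.rpow_pos_of_pos ht0p α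
  have hξαnn : (0:ℝ) ≤ ξ ^ α := Real.rpow_nonneg hξ0 α
  have hsin0 : 0 < Real.sin (α * π) := by
    apply Real.sin_pos_of_pos_of_lt_pi
    · exact mul_pos hα.1 hπ
    · nlinarith [hα.2, hπ]
  have hsin1 : Real.sin (α * π) ≤ 1 := Real.sin_le_one _
  have hcos1 : Real.cos (α * π) ≤ 1 := Real.cos_le_one _
  have hcosm1 : -1 ≤ Real.cos (α * π) := Real.neg_one_le_cos _
  -- rewrite t₀ ^ (2α) as (t₀ ^ α) ^ 2
  have h2a : t₀ ^ (2 * α) = (t₀ ^ α) ^ 2 := by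
    rw [mul_comm, Real.rpow_mul (le_of_lt ht0p)]
    norm_num
  -- split of t₀ ^ (α - 1)
  have hsplit : t₀ ^ (α - 1) = t₀ ^ α / t₀ := by
    rw [Real.rpow_sub ht0p, Real.rpow_one]
  -- bounds on the two terms
  have hξt : ξ * t₀ ^ (α - 1) ≤ c₀ * t₀ ^ α := by
    rw [hsplit]
    have h1 : ξ * (t₀ ^ α / t₀) ≤ (c₀ * t₀) * (t₀ ^ α / t₀) :=
      mul_le_mul_of_nonneg_right hξ (by positivity)
    calc ξ * (t₀ ^ α / t₀) ≤ (c₀ * t₀) * (t₀ ^ α / t₀) := h1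
      _ = c₀ * t₀ ^ α := by field_simp
  have hξα : ξ ^ α ≤ c₀ ^ α * t₀ ^ α := by
    rw [← Real.mul_rpow (le_of_lt hc₀) (le_of_lt ht0p)]
    exact Real.rpow_le_rpow hξ0 hξ (le_of_lt hα.1)
  have hξtnn : 0 ≤ ξ * t₀ ^ (α - 1) := by positivity
  -- key bound
  have hSpos : 0 < γ + 1 / lam1 := by positivity
  have hinv : 1 / lam ≤ 1 / lam1 := one_div_le_one_div_of_le hlam1 hlam
  have hkey : ξ * t₀ ^ (α - 1) + lam * γ * ξ ^ α ≤ 1 / 2 * (lam * t₀ ^ α) := by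
    by_cases hc : γ + 1 / lam1 < 1 / 2
    · obtain ⟨hc1, hc2⟩ := hcase1 hc
      have hcα : c₀ ^ α ≤ c₀ := by
        calc c₀ ^ α ≤ c₀ ^ (1:ℝ) :=
              Real.rpow_le_rpow_of_exponent_le (le_of_lt hc1) (le_of_lt hα.2)
          _ = c₀ := Real.rpow_one c₀
      have hcS : c₀ * (γ + 1 / lam1) < 1 / 2 := by
        have h := mul_lt_mul_of_pos_right hc2 hSpos
        rwa [mul_assoc, inv_mul_cancel₀ (ne_of_gt hSpos), mul_one] at h
      have h1 : lam * γ * ξ ^ α ≤ lam * γ * (c₀ * t₀ ^ α) := by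
        have h0 := le_trans hξα (mul_le_mul_of_nonneg_right hcα (le_of_lt htα))
        exact mul_le_mul_of_nonneg_left h0 (by positivity)
      have h2 : c₀ * (1 / lam + γ) < 1 / 2 := by nlinarith
      have h3 : c₀ * t₀ ^ α + lam * γ * (c₀ * t₀ ^ α) ≤ 1 / 2 * (lam * t₀ ^ α) := by
        have h4 : lam * (c₀ * (1 / lam + γ)) ≤ lam * (1/2) :=
          mul_le_mul_of_nonneg_left (le_of_lt h2) (le_of_lt hlamp)
        have h5 : lam * (c₀ * (1 / lam + γ)) = c₀ + lam * γ * c₀ := by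
          field_simp
        have h6 := mul_le_mul_of_nonneg_right
          (show c₀ + lam * γ * c₀ ≤ lam / 2 by linarith) (le_of_lt htα)
        have h7 : c₀ * t₀ ^ α + lam * γ * (c₀ * t₀ ^ α) = (c₀ + lam * γ * c₀) * t₀ ^ α := by ring
        have h8 : 1 / 2 * (lam * t₀ ^ α) = lam / 2 * t₀ ^ α := by ring
        linarith
      linarith [hξt]
    · obtain ⟨hc1, hc2⟩ := hcase2 (le_of_not_gt hc)
      have hcα : c₀ ≤ c₀ ^ α := by
        calc c₀ = c₀ ^ (1:ℝ) := (Real.rpow_one c₀).symm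
          _ ≤ c₀ ^ α :=
            Real.rpow_le_rpow_of_exponent_ge hc₀ (le_of_lt hc1) (le_of_lt hα.2)
      have hcαpos : 0 < c₀ ^ α := Real.rpow_pos_of_pos hc₀ α
      have hcS : c₀ ^ α * (γ + 1 / lam1) < 1 / 2 := by
        have h := mul_lt_mul_of_pos_right hc2 hSpos
        rwa [mul_assoc, inv_mul_cancel₀ (ne_of_gt hSpos), mul_one] at h
      have h1 : lam * γ * ξ ^ α ≤ lam * γ * (c₀ ^ α * t₀ ^ α) :=
        mul_le_mul_of_nonneg_left hξα (by positivity)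
      have h2 : c₀ ^ α * (1 / lam + γ) < 1 / 2 := by nlinarith [hcαpos]
      have h3 : c₀ ^ α * t₀ ^ α + lam * γ * (c₀ ^ α * t₀ ^ α) ≤ 1 / 2 * (lam * t₀ ^ α) := by
        have h4 : lam * (c₀ ^ α * (1 / lam + γ)) ≤ lam * (1/2) :=
          mul_le_mul_of_nonneg_left (le_of_lt h2) (le_of_lt hlamp)
        have h5 : lam * (c₀ ^ α * (1 / lam + γ)) = c₀ ^ α + lam * γ * c₀ ^ α := by
          field_simp
        have h6 := mul_le_mul_of_nonneg_right
          (show c₀ ^ α + lam * γ * c₀ ^ α ≤ lam / 2 by linarith) (le_of_lt htα)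
        have h7 : c₀ ^ α * t₀ ^ α + lam * γ * (c₀ ^ α * t₀ ^ α)
            = (c₀ ^ α + lam * γ * c₀ ^ α) * t₀ ^ α := by ring
        have h8 : 1 / 2 * (lam * t₀ ^ α) = lam / 2 * t₀ ^ α := by ring
        linarith
      have hξt' : ξ * t₀ ^ (α - 1) ≤ c₀ ^ α * t₀ ^ α :=
        le_trans hξt (mul_le_mul_of_nonneg_right hcα (le_of_lt htα))
      linarith
  rw [h2a, show -ξ * t₀ ^ (α - 1) = -(ξ * t₀ ^ (α - 1)) from by ring]
  exact b_aux π γ lam (Real.sin (α * π)) (Real.cos (α * π)) (ξ * t₀ ^ (α - 1)) (ξ ^ α)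
    (t₀ ^ α) hπ hγ hlamp hsin0 hsin1 hcos1 hcosm1 hξtnn hξαnn htα hkey
end

section
/- Let γ > 0, λ ≥ λ₁ > 0, α ∈ (0,1). With c₀ and the notation above, define J₀ = t₀^{α-1} ln t₀ · ∫_0^{c₀ t₀} e^{-ξ} b_{α,1}(λ, t₀, ξ) · F(ξ, t₀, α)/(f(ξ,t₀,α)² + g(ξ,α)²) dξ. Then for all t₀ ≥ 1, J₀ ≤ -(C₀/λ) t₀^{-α-1} ln t₀, where C₀ = C₀(γ, α, λ₁) > 0 is a constant independent of λ and t₀ (one may take C₀ = (3γ sin(απ)/(25π)) ∫_0^{c₀} e^{-ξ} ξ^α dξ). -/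
/-!
Write `u = ξ t₀^{α-1}`, `v = λγξ^α`, `A = λt₀^α`, so that `f = -u + v cos(απ) + A` and
`g = v sin(απ)`. The conditions on `c₀` imply `c₀/λ₁ + γc₀^α ≤ 1/2`, which gives
`u + v ≤ A/2` for `0 ≤ ξ ≤ c₀t₀` and `λ ≥ λ₁`. Then `f ≥ A/2`, so `A²/4 ≤ f² + g² ≤ 5A²/2`, and
`sin² + cos² = 1` turns `F` into `v² - (A - u)² ≤ -A²/4`. Hence the integrand is at most
`-(γ sin(απ) / (25πλt₀^{2α})) e^{-ξ} ξ^α`; integrating over `(0, c₀t₀] ⊇ (0, c₀]` and multiplying by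
`t₀^{α-1} ln t₀ ≥ 0` gives the bound with `C₀ = (γ sin(απ)/(25π)) ∫_0^{c₀} e^{-ξ} ξ^α dξ`.
-/

open Real MeasureTheory Set

section Kernel

variable {s c u v A : ℝ}

lemma sq_add_sq_sub_two_mul_eq (hsc : s ^ 2 + c ^ 2 = 1) :
    (-u + v * c + A) ^ 2 + (v * s) ^ 2 - 2 * (-u + v * c + A) * (-u + A) = v ^ 2 - (A - u) ^ 2 := by
  linear_combination v ^ 2 * hsc

lemma half_le_neg_add_mul_add (hc : -1 ≤ c) (hv : 0 ≤ v) (h : u + v ≤ A / 2) :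
    A / 2 ≤ -u + v * c + A := by
  nlinarith

lemma sq_add_sq_le (hsc : s ^ 2 + c ^ 2 = 1) (hu : 0 ≤ u) (hv : 0 ≤ v) (h : u + v ≤ A / 2) :
    (-u + v * c + A) ^ 2 + (v * s) ^ 2 ≤ 5 / 2 * A ^ 2 := by
  have hf := half_le_neg_add_mul_add (c := c) (by nlinarith [sq_nonneg s]) hv h
  have hc : c ≤ 1 := by nlinarith [sq_nonneg s]
  have hs : s ^ 2 ≤ 1 := by nlinarith [sq_nonneg c]
  nlinarith [mul_le_mul_of_nonneg_left hc hv, mul_le_mul_of_nonneg_left hs (sq_nonneg v)]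

lemma kernel_le (hsc : s ^ 2 + c ^ 2 = 1) (hs : 0 ≤ s) (hu : 0 ≤ u) (hv : 0 ≤ v) (hA : 0 < A)
    (h : u + v ≤ A / 2) :
    1 / π * (v * s) / ((-u + v * c + A) ^ 2 + (v * s) ^ 2) *
      (((-u + v * c + A) ^ 2 + (v * s) ^ 2 - 2 * (-u + v * c + A) * (-u + A)) /
        ((-u + v * c + A) ^ 2 + (v * s) ^ 2))
      ≤ -(v * s / (25 * π * A ^ 2)) := by
  rw [sq_add_sq_sub_two_mul_eq hsc]
  set D := (-u + v * c + A) ^ 2 + (v * s) ^ 2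
  have hD : A ^ 2 / 4 ≤ D := by
    have := half_le_neg_add_mul_add (c := c) (by nlinarith [sq_nonneg s]) hv h
    nlinarith [sq_nonneg (v * s)]
  have hDle : D ≤ 5 / 2 * A ^ 2 := sq_add_sq_le hsc hu hv h
  have hF : v ^ 2 - (A - u) ^ 2 ≤ -(A ^ 2 / 4) := by nlinarith
  have hg : 0 ≤ v * s := mul_nonneg hv hs
  have hD0 : 0 < D := lt_of_lt_of_le (by positivity) hD
  have hD2 : D ^ 2 ≤ 25 / 4 * A ^ 4 := by nlinarith
  have hnum : (v * s) * (25 * A ^ 2 * (v ^ 2 - (A - u) ^ 2) + D ^ 2) ≤ 0 :=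
    mul_nonpos_of_nonneg_of_nonpos hg (by nlinarith)
  calc 1 / π * (v * s) / D * ((v ^ 2 - (A - u) ^ 2) / D)
      = v * s * (v ^ 2 - (A - u) ^ 2) / (π * D ^ 2) := by field_simp
    _ ≤ -(v * s) / (25 * π * A ^ 2) := by
        rw [div_le_div_iff₀ (by positivity) (by positivity)]
        nlinarith [mul_nonpos_of_nonneg_of_nonpos pi_pos.le hnum]
    _ = -(v * s / (25 * π * A ^ 2)) := neg_div _ _

end Kernel

lemma div_add_mul_rpow_le_half {γ lam1 α c₀ : ℝ} (hγ : 0 ≤ γ) (hlam1 : 0 < lam1) (hα : α ≤ 1)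
    (hc₀ : 0 < c₀)
    (hcase1 : γ + 1 / lam1 < 1 / 2 → 1 < c₀ ∧ c₀ < (1 / 2) * (γ + 1 / lam1)⁻¹)
    (hcase2 : 1 / 2 ≤ γ + 1 / lam1 → c₀ < 1 ∧ c₀ ^ α < (1 / 2) * (γ + 1 / lam1)⁻¹) :
    c₀ / lam1 + γ * c₀ ^ α ≤ 1 / 2 := by
  have hB : 0 < γ + 1 / lam1 := by positivity
  have mul_lt {x : ℝ} (hx : x < (1 / 2) * (γ + 1 / lam1)⁻¹) : x * (γ + 1 / lam1) < 1 / 2 := by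
    rwa [← lt_div_iff₀ hB, div_eq_mul_inv]
  rcases lt_or_ge (γ + 1 / lam1) (1 / 2) with h | h
  · obtain ⟨h1, h2⟩ := hcase1 h
    have : c₀ ^ α ≤ c₀ := by
      simpa using Real.rpow_le_rpow_of_exponent_le h1.le hα
    have := mul_lt h2
    rw [mul_add, mul_one_div] at this
    nlinarith
  · obtain ⟨h1, h2⟩ := hcase2 h
    have : c₀ ≤ c₀ ^ α := by
      simpa using Real.rpow_le_rpow_of_exponent_ge hc₀ h1.le hα
    have : c₀ / lam1 ≤ c₀ ^ α / lam1 := by gcongr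
    have := mul_lt h2
    rw [mul_add, mul_one_div] at this
    nlinarith

section Weight

variable {α : ℝ}

lemma continuous_exp_neg_mul_rpow (hα : 0 ≤ α) : Continuous fun ξ : ℝ => exp (-ξ) * ξ ^ α := by
  have := Real.continuous_rpow_const hα
  fun_prop

lemma setIntegral_exp_neg_mul_rpow_pos {a : ℝ} (ha : 0 < a) (hα : 0 ≤ α) :
    0 < ∫ ξ in Ioc 0 a, exp (-ξ) * ξ ^ α := by
  rw [← intervalIntegral.integral_of_le ha.le]
  refine intervalIntegral.intervalIntegral_pos_of_pos_on
    ((continuous_exp_neg_mul_rpow hα).intervalIntegrable _ _) (fun ξ hξ => ?_) ha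
  have := Real.rpow_pos_of_pos hξ.1 α
  positivity

lemma setIntegral_exp_neg_mul_rpow_mono {a b : ℝ} (hab : a ≤ b) (hα : 0 ≤ α) :
    ∫ ξ in Ioc 0 a, exp (-ξ) * ξ ^ α ≤ ∫ ξ in Ioc 0 b, exp (-ξ) * ξ ^ α := by
  refine setIntegral_mono_set (continuous_exp_neg_mul_rpow hα).integrableOn_Ioc ?_
    (Ioc_subset_Ioc_right hab).eventuallyLE
  filter_upwards [ae_restrict_mem measurableSet_Ioc] with ξ hξ
  have := Real.rpow_nonneg hξ.1.le α
  positivity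

end Weight

noncomputable section

namespace J0

def f (γ α lam t₀ ξ : ℝ) : ℝ :=
  -ξ * t₀ ^ (α - 1) + lam * γ * ξ ^ α * cos (α * π) + lam * t₀ ^ α

def g (γ α lam ξ : ℝ) : ℝ := lam * γ * ξ ^ α * sin (α * π)

def integrand (γ α lam t₀ ξ : ℝ) : ℝ :=
  exp (-ξ) * ((1 / π) * g γ α lam ξ / (f γ α lam t₀ ξ ^ 2 + g γ α lam ξ ^ 2)) *
    ((f γ α lam t₀ ξ ^ 2 + g γ α lam ξ ^ 2
        - 2 * f γ α lam t₀ ξ * (-ξ * t₀ ^ (α - 1) + lam * t₀ ^ α)) /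
      (f γ α lam t₀ ξ ^ 2 + g γ α lam ξ ^ 2))

variable {γ α lam t₀ ξ : ℝ}

lemma mul_rpow_sub_one_add_le_half {c₀ lam1 : ℝ} (hγ : 0 ≤ γ) (hα : 0 ≤ α) (hlam1 : 0 < lam1)
    (hlam : lam1 ≤ lam) (ht₀ : 0 < t₀) (hξ : ξ ∈ Icc 0 (c₀ * t₀))
    (hc₀ : c₀ / lam1 + γ * c₀ ^ α ≤ 1 / 2) :
    ξ * t₀ ^ (α - 1) + lam * γ * ξ ^ α ≤ lam * t₀ ^ α / 2 := by
  obtain ⟨hξ0, hξc⟩ := hξ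
  have hc₀0 : 0 ≤ c₀ := nonneg_of_mul_nonneg_left (hξ0.trans hξc) ht₀
  have hlam0 : 0 < lam := hlam1.trans_le hlam
  have hu : ξ * t₀ ^ (α - 1) ≤ c₀ * t₀ ^ α := by
    calc ξ * t₀ ^ (α - 1) ≤ c₀ * t₀ * t₀ ^ (α - 1) := by gcongr
      _ = c₀ * t₀ ^ α := by rw [Real.rpow_sub_one ht₀.ne']; field_simp
  have hv : ξ ^ α ≤ c₀ ^ α * t₀ ^ α := by
    rw [← Real.mul_rpow hc₀0 ht₀.le]; gcongr
  have hc₀' : c₀ + lam * γ * c₀ ^ α ≤ lam / 2 := by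
    have : c₀ / lam ≤ c₀ / lam1 := by gcongr
    have : c₀ / lam + γ * c₀ ^ α ≤ 1 / 2 := by linarith
    have := mul_le_mul_of_nonneg_left this hlam0.le
    rwa [mul_add, mul_div_cancel₀ _ hlam0.ne', ← mul_assoc, mul_one_div] at this
  have hT := Real.rpow_nonneg ht₀.le α
  nlinarith [mul_le_mul_of_nonneg_left hv (by positivity : 0 ≤ lam * γ)]

lemma integrand_le (hγ : 0 ≤ γ) (hsin : 0 ≤ sin (α * π)) (hlam : 0 < lam) (ht₀ : 0 < t₀)
    (hξ : 0 ≤ ξ) (hsmall : ξ * t₀ ^ (α - 1) + lam * γ * ξ ^ α ≤ lam * t₀ ^ α / 2) :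
    integrand γ α lam t₀ ξ
      ≤ -(γ * sin (α * π) / (25 * π * lam * (t₀ ^ α) ^ 2) * (exp (-ξ) * ξ ^ α)) := by
  have hT := Real.rpow_pos_of_pos ht₀ α
  have hker := kernel_le (sin_sq_add_cos_sq (α * π)) hsin
    (by positivity : 0 ≤ ξ * t₀ ^ (α - 1)) (by positivity : 0 ≤ lam * γ * ξ ^ α)
    (by positivity : 0 < lam * t₀ ^ α) hsmall
  simp only [integrand, f, g, neg_mul, mul_assoc (exp (-ξ))]
  calc _ ≤ exp (-ξ) * -(lam * γ * ξ ^ α * sin (α * π) / (25 * π * (lam * t₀ ^ α) ^ 2)) := by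
        gcongr
    _ = _ := by field_simp

lemma continuousOn_integrand (hα : 0 ≤ α) {S : Set ℝ}
    (hS : ∀ ξ ∈ S, f γ α lam t₀ ξ ^ 2 + g γ α lam ξ ^ 2 ≠ 0) :
    ContinuousOn (integrand γ α lam t₀) S := by
  have := Real.continuous_rpow_const hα
  have hf : Continuous (f γ α lam t₀) := by unfold f; fun_prop
  have hg : Continuous (g γ α lam) := by unfold g; fun_prop
  unfold integrand
  fun_prop (disch := assumption)

lemma half_le_f (hξ : 0 ≤ ξ) (hlam : 0 ≤ lam) (hγ : 0 ≤ γ)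
    (hsmall : ξ * t₀ ^ (α - 1) + lam * γ * ξ ^ α ≤ lam * t₀ ^ α / 2) :
    lam * t₀ ^ α / 2 ≤ f γ α lam t₀ ξ := by
  rw [f, neg_mul]
  exact half_le_neg_add_mul_add (neg_one_le_cos _) (by positivity) hsmall

lemma integrableOn_integrand {b : ℝ} (hγ : 0 ≤ γ) (hα : 0 ≤ α) (hlam : 0 < lam) (ht₀ : 0 < t₀)
    (hsmall : ∀ ξ ∈ Icc 0 b, ξ * t₀ ^ (α - 1) + lam * γ * ξ ^ α ≤ lam * t₀ ^ α / 2) :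
    IntegrableOn (integrand γ α lam t₀) (Ioc 0 b) := by
  refine (continuousOn_integrand hα fun ξ hξ => ?_).integrableOn_Icc.mono_set Ioc_subset_Icc_self
  have hf : 0 < f γ α lam t₀ ξ :=
    lt_of_lt_of_le (by positivity) (half_le_f hξ.1 hlam.le hγ (hsmall ξ hξ))
  positivity

lemma setIntegral_integrand_le {c₀ lam1 : ℝ} (hγ : 0 ≤ γ) (hα : 0 ≤ α)
    (hsin : 0 ≤ sin (α * π)) (hlam1 : 0 < lam1) (hlam : lam1 ≤ lam) (ht₀ : 1 ≤ t₀)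
    (hc₀ : 0 ≤ c₀) (hc₀small : c₀ / lam1 + γ * c₀ ^ α ≤ 1 / 2) :
    ∫ ξ in Ioc 0 (c₀ * t₀), integrand γ α lam t₀ ξ
      ≤ -(γ * sin (α * π) / (25 * π * lam * (t₀ ^ α) ^ 2)
          * ∫ ξ in Ioc 0 c₀, exp (-ξ) * ξ ^ α) := by
  set κ := γ * sin (α * π) / (25 * π * lam * (t₀ ^ α) ^ 2)
  have hlam0 : 0 < lam := hlam1.trans_le hlam
  have ht₀0 : 0 < t₀ := one_pos.trans_le ht₀
  have hsmall (ξ) (hξ : ξ ∈ Icc 0 (c₀ * t₀)) :=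
    mul_rpow_sub_one_add_le_half hγ hα hlam1 hlam ht₀0 hξ hc₀small
  calc _ ≤ ∫ ξ in Ioc 0 (c₀ * t₀), -(κ * (exp (-ξ) * ξ ^ α)) :=
        setIntegral_mono_on (integrableOn_integrand hγ hα hlam0 ht₀0 hsmall)
          ((continuous_exp_neg_mul_rpow hα).integrableOn_Ioc.const_mul κ).neg measurableSet_Ioc
          fun ξ hξ => integrand_le hγ hsin hlam0 ht₀0 hξ.1.le (hsmall ξ (Ioc_subset_Icc_self hξ))
    _ = -(κ * ∫ ξ in Ioc 0 (c₀ * t₀), exp (-ξ) * ξ ^ α) := by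
        rw [integral_neg, integral_const_mul]
    _ ≤ _ := by
        have hκ : 0 ≤ κ := div_nonneg (mul_nonneg hγ hsin) (by positivity)
        exact neg_le_neg (mul_le_mul_of_nonneg_left
          (setIntegral_exp_neg_mul_rpow_mono (le_mul_of_one_le_right hc₀ ht₀) hα) hκ)

end J0

end
/-- The principal term `J₀` is bounded above by `-(C₀/λ) t₀^{-α-1} ln t₀`. -/
theorem J0_estimate (γ lam1 α c₀ : ℝ)
    (hγ : 0 < γ) (hlam1 : 0 < lam1) (hα : α ∈ Ioo (0:ℝ) 1) (hc₀ : 0 < c₀)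
    (hcase1 : γ + 1 / lam1 < 1 / 2 → 1 < c₀ ∧ c₀ < (1 / 2) * (γ + 1 / lam1)⁻¹)
    (hcase2 : 1 / 2 ≤ γ + 1 / lam1 → c₀ < 1 ∧ c₀ ^ α < (1 / 2) * (γ + 1 / lam1)⁻¹) :
    ∃ C₀ : ℝ, 0 < C₀ ∧ ∀ lam t₀ : ℝ, lam1 ≤ lam → 1 ≤ t₀ →
      t₀ ^ (α - 1) * Real.log t₀ *
        ∫ ξ in Ioc (0:ℝ) (c₀ * t₀), Real.exp (-ξ) *
          ((1 / π) * (lam * γ * ξ ^ α * Real.sin (α * π)) /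
            ((-ξ * t₀ ^ (α - 1) + lam * γ * ξ ^ α * Real.cos (α * π) + lam * t₀ ^ α) ^ 2
              + (lam * γ * ξ ^ α * Real.sin (α * π)) ^ 2)) *
          (((-ξ * t₀ ^ (α - 1) + lam * γ * ξ ^ α * Real.cos (α * π) + lam * t₀ ^ α) ^ 2
              + (lam * γ * ξ ^ α * Real.sin (α * π)) ^ 2
              - 2 * (-ξ * t₀ ^ (α - 1) + lam * γ * ξ ^ α * Real.cos (α * π) + lam * t₀ ^ α)
                  * (-ξ * t₀ ^ (α - 1) + lam * t₀ ^ α)) /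
            ((-ξ * t₀ ^ (α - 1) + lam * γ * ξ ^ α * Real.cos (α * π) + lam * t₀ ^ α) ^ 2
              + (lam * γ * ξ ^ α * Real.sin (α * π)) ^ 2))
      ≤ -(C₀ / lam) * t₀ ^ (-α - 1) * Real.log t₀ := by
  obtain ⟨hα0, hα1⟩ := hα
  have hsin : 0 < sin (α * π) := sin_pos_of_pos_of_lt_pi (by positivity) (by nlinarith [pi_pos])
  have hc₀small := div_add_mul_rpow_le_half hγ.le hlam1 hα1.le hc₀ hcase1 hcase2
  set K := ∫ ξ in Ioc 0 c₀, exp (-ξ) * ξ ^ α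
  have hK : 0 < K := setIntegral_exp_neg_mul_rpow_pos hc₀ hα0.le
  refine ⟨γ * sin (α * π) * K / (25 * π), by positivity, fun lam t₀ hlam ht₀ => ?_⟩
  change t₀ ^ (α - 1) * log t₀ * ∫ ξ in Ioc 0 (c₀ * t₀), J0.integrand γ α lam t₀ ξ ≤ _
  have ht₀0 : 0 < t₀ := one_pos.trans_le ht₀
  have hlam0 : 0 < lam := hlam1.trans_le hlam
  have ht : t₀ ^ (α - 1) = t₀ ^ (-α - 1) * (t₀ ^ α) ^ 2 := by
    rw [← rpow_natCast, ← rpow_mul ht₀0.le, ← rpow_add ht₀0]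
    ring_nf
  calc _ ≤ t₀ ^ (α - 1) * log t₀ * -(γ * sin (α * π) / (25 * π * lam * (t₀ ^ α) ^ 2) * K) := by
        gcongr
        · exact mul_nonneg (by positivity) (log_nonneg ht₀)
        · exact J0.setIntegral_integrand_le hγ.le hα0.le hsin.le hlam1 hlam ht₀ hc₀.le hc₀small
    _ = _ := by
        rw [ht]
        field_simp
end

section
/- Under the same notation, the integral I_{2,0} = t₀^{α-1} (γ/π) ∫_0^{c₀ t₀} e^{-ξ} λ ξ^α (ln ξ · sin(απ) + π cos(απ)) / (f(ξ, t₀, α)² + g(ξ, α)²) dξ satisfies |I_{2,0}| ≤ C t₀^{-α-1} for all t₀ ≥ 1, where C = C(γ, α, λ₁) > 0; in fact |I_{2,0}| ≤ (4γ/(πλ)) t₀^{-α-1} ∫_0^∞ e^{-ξ} ξ^α (|ln ξ| + π) dξ. -/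
open Real MeasureTheory Set

lemma abs_log_le_sum (x : ℝ) (hx : 0 < x) (ε : ℝ) (hε : 0 < ε) :
    |Real.log x| ≤ x ^ ε / ε + x ^ (-ε) / ε := by
  have h1 : Real.log x ≤ x ^ ε / ε := Real.log_le_rpow_div hx.le hε
  have h2 : -Real.log x ≤ x ^ (-ε) / ε := by
    have := Real.log_le_rpow_div (x := x⁻¹) (by positivity) hε
    rw [Real.log_inv, Real.inv_rpow hx.le, ← Real.rpow_neg hx.le] at this
    linarith
  have hp1 : 0 ≤ x ^ ε / ε := by positivity
  have hp2 : 0 ≤ x ^ (-ε) / ε := by positivity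
  rcases abs_cases (Real.log x) with ⟨h, _⟩ | ⟨h, _⟩ <;> rw [h] <;> linarith

lemma G_integrable {α : ℝ} (hα : α ∈ Ioo (0:ℝ) 1) :
    IntegrableOn (fun x => Real.exp (-x) * x ^ α * (|Real.log x| + π)) (Ioi (0:ℝ)) := by
  obtain ⟨hα0, hα1⟩ := hα
  have hε : 0 < α / 2 := by linarith
  have g1 : IntegrableOn (fun x => Real.exp (-x) * x ^ (3*α/2)) (Ioi (0:ℝ)) := by
    have := Real.GammaIntegral_convergent (show (0:ℝ) < 3*α/2 + 1 by linarith)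
    simpa using this
  have g2 : IntegrableOn (fun x => Real.exp (-x) * x ^ (α/2)) (Ioi (0:ℝ)) := by
    have := Real.GammaIntegral_convergent (show (0:ℝ) < α/2 + 1 by linarith)
    simpa using this
  have g3 : IntegrableOn (fun x => Real.exp (-x) * x ^ α) (Ioi (0:ℝ)) := by
    have := Real.GammaIntegral_convergent (show (0:ℝ) < α + 1 by linarith)
    simpa using this
  have hb : IntegrableOn (fun x =>
      (2/α) * (Real.exp (-x) * x ^ (3*α/2)) + ((2/α) * (Real.exp (-x) * x ^ (α/2))
        + π * (Real.exp (-x) * x ^ α))) (Ioi (0:ℝ)) :=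
    (g1.const_mul _).add ((g2.const_mul _).add (g3.const_mul _))
  apply hb.mono'
  · apply ContinuousOn.aestronglyMeasurable _ measurableSet_Ioi
    apply ContinuousOn.mul
    · exact ((Real.continuous_exp.comp continuous_neg).continuousOn).mul
        (fun x hx => (Real.continuousAt_rpow_const x α (Or.inl (ne_of_gt hx))).continuousWithinAt)
    · exact ((Real.continuousOn_log.mono (fun x hx => ne_of_gt hx)).abs.add continuousOn_const)
  · filter_upwards [ae_restrict_mem measurableSet_Ioi] with x hx
    have hx : (0:ℝ) < x := hx
    have hlog := abs_log_le_sum x hx (α/2) hε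
    have hxα : 0 ≤ x ^ α := Real.rpow_nonneg hx.le α
    have he : 0 < Real.exp (-x) := Real.exp_pos _
    rw [Real.norm_eq_abs, abs_of_nonneg (by positivity)]
    have key : Real.exp (-x) * x ^ α * (|Real.log x| + π)
        ≤ Real.exp (-x) * x ^ α * (x ^ (α/2) / (α/2) + x ^ (-(α/2)) / (α/2) + π) := by
      apply mul_le_mul_of_nonneg_left _ (by positivity)
      linarith
    refine key.trans (le_of_eq ?_)
    have e1 : x ^ α * x ^ (α/2) = x ^ (3*α/2) := by
      rw [← Real.rpow_add hx]; ring_nf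
    have e2 : x ^ α * x ^ (-(α/2)) = x ^ (α/2) := by
      rw [← Real.rpow_add hx]; ring_nf
    have hαne : α ≠ 0 := ne_of_gt hα0
    calc Real.exp (-x) * x ^ α * (x ^ (α/2) / (α/2) + x ^ (-(α/2)) / (α/2) + π)
        = (2/α) * (Real.exp (-x) * (x ^ α * x ^ (α/2)))
          + ((2/α) * (Real.exp (-x) * (x ^ α * x ^ (-(α/2))))
          + π * (Real.exp (-x) * x ^ α)) := by field_simp; ring
      _ = _ := by rw [e1, e2]

set_option maxHeartbeats 1600000 in
/-- Estimate of the integral `I_{2,0}`. -/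
theorem I20_estimate (γ lam1 α c₀ : ℝ)
    (hγ : 0 < γ) (hlam1 : 0 < lam1) (hα : α ∈ Ioo (0:ℝ) 1) (hc₀ : 0 < c₀)
    (hcase1 : γ + 1 / lam1 < 1 / 2 → 1 < c₀ ∧ c₀ < (1 / 2) * (γ + 1 / lam1)⁻¹)
    (hcase2 : 1 / 2 ≤ γ + 1 / lam1 → c₀ < 1 ∧ c₀ ^ α < (1 / 2) * (γ + 1 / lam1)⁻¹) :
    (∃ C : ℝ, 0 < C ∧ ∀ lam t₀ : ℝ, lam1 ≤ lam → 1 ≤ t₀ →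
      |t₀ ^ (α - 1) * (γ / π) *
          ∫ ξ in Ioc (0:ℝ) (c₀ * t₀), Real.exp (-ξ) *
            (lam * ξ ^ α * (Real.log ξ * Real.sin (α * π) + π * Real.cos (α * π))) /
            ((-ξ * t₀ ^ (α - 1) + lam * γ * ξ ^ α * Real.cos (α * π) + lam * t₀ ^ α) ^ 2
              + (lam * γ * ξ ^ α * Real.sin (α * π)) ^ 2)|
        ≤ C * t₀ ^ (-α - 1)) ∧
    ∀ lam t₀ : ℝ, lam1 ≤ lam → 1 ≤ t₀ →
      |t₀ ^ (α - 1) * (γ / π) *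
          ∫ ξ in Ioc (0:ℝ) (c₀ * t₀), Real.exp (-ξ) *
            (lam * ξ ^ α * (Real.log ξ * Real.sin (α * π) + π * Real.cos (α * π))) /
            ((-ξ * t₀ ^ (α - 1) + lam * γ * ξ ^ α * Real.cos (α * π) + lam * t₀ ^ α) ^ 2
              + (lam * γ * ξ ^ α * Real.sin (α * π)) ^ 2)|
        ≤ (4 * γ / (π * lam)) * t₀ ^ (-α - 1) *
            ∫ ξ in Ioi (0:ℝ), Real.exp (-ξ) * ξ ^ α * (|Real.log ξ| + π) := by
  obtain ⟨hα0, hα1⟩ := hα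
  have hπ : (0:ℝ) < π := Real.pi_pos
  set J := ∫ ξ in Ioi (0:ℝ), Real.exp (-ξ) * ξ ^ α * (|Real.log ξ| + π) with hJdef
  have hJ0 : 0 ≤ J := by
    apply setIntegral_nonneg measurableSet_Ioi
    intro x hx
    have : 0 ≤ |Real.log x| + π := by positivity
    have h2 : 0 ≤ x ^ α := Real.rpow_nonneg (le_of_lt hx) α
    positivity
  have hGint : IntegrableOn (fun x => Real.exp (-x) * x ^ α * (|Real.log x| + π))
      (Ioi (0:ℝ)) := G_integrable ⟨hα0, hα1⟩
  -- the main explicit bound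
  have main : ∀ lam t₀ : ℝ, lam1 ≤ lam → 1 ≤ t₀ →
      |t₀ ^ (α - 1) * (γ / π) *
          ∫ ξ in Ioc (0:ℝ) (c₀ * t₀), Real.exp (-ξ) *
            (lam * ξ ^ α * (Real.log ξ * Real.sin (α * π) + π * Real.cos (α * π))) /
            ((-ξ * t₀ ^ (α - 1) + lam * γ * ξ ^ α * Real.cos (α * π) + lam * t₀ ^ α) ^ 2
              + (lam * γ * ξ ^ α * Real.sin (α * π)) ^ 2)|
        ≤ (4 * γ / (π * lam)) * t₀ ^ (-α - 1) * J := by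
    intro lam t₀ hlam ht₀
    have hlam0 : 0 < lam := lt_of_lt_of_le hlam1 hlam
    have ht₀0 : 0 < t₀ := lt_of_lt_of_le one_pos ht₀
    have htα : 0 < t₀ ^ α := Real.rpow_pos_of_pos ht₀0 α
    have htα1 : 0 < t₀ ^ (α - 1) := Real.rpow_pos_of_pos ht₀0 _
    -- key inequality: c₀ / lam + γ * c₀ ^ α ≤ 1/2
    have hkey : c₀ / lam + γ * c₀ ^ α ≤ 1 / 2 := by
      have hsum : 0 < γ + 1 / lam1 := by positivity
      by_cases h : γ + 1 / lam1 < 1 / 2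
      · obtain ⟨h1c, h2c⟩ := hcase1 h
        have hca : c₀ ^ α ≤ c₀ := by
          calc c₀ ^ α ≤ c₀ ^ (1:ℝ) :=
                Real.rpow_le_rpow_of_exponent_le h1c.le hα1.le
            _ = c₀ := Real.rpow_one c₀
        have hmul : c₀ * (γ + 1 / lam1) < 1 / 2 := by
          calc c₀ * (γ + 1 / lam1) < ((1/2) * (γ + 1/lam1)⁻¹) * (γ + 1/lam1) :=
                mul_lt_mul_of_pos_right h2c hsum
            _ = 1 / 2 := by field_simp
        have t1 : c₀ / lam ≤ c₀ / lam1 := by gcongr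
        have t2 : γ * c₀ ^ α ≤ γ * c₀ := by nlinarith
        have t3 : c₀ / lam1 + γ * c₀ = c₀ * (γ + 1 / lam1) := by
          field_simp; ring
        linarith
      · obtain ⟨h1c, h2c⟩ := hcase2 (le_of_not_gt h)
        have hca : c₀ ≤ c₀ ^ α := by
          calc c₀ = c₀ ^ (1:ℝ) := (Real.rpow_one c₀).symm
            _ ≤ c₀ ^ α := Real.rpow_le_rpow_of_exponent_ge hc₀ h1c.le hα1.le
        have hcα0 : 0 < c₀ ^ α := Real.rpow_pos_of_pos hc₀ α
        have hmul : c₀ ^ α * (γ + 1 / lam1) < 1 / 2 := by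
          calc c₀ ^ α * (γ + 1 / lam1) < ((1/2) * (γ + 1/lam1)⁻¹) * (γ + 1/lam1) :=
                mul_lt_mul_of_pos_right h2c hsum
            _ = 1 / 2 := by field_simp
        have t1 : c₀ / lam ≤ c₀ ^ α / lam1 := by
          calc c₀ / lam ≤ c₀ / lam1 := by gcongr
            _ ≤ c₀ ^ α / lam1 := by gcongr
        have t3 : c₀ ^ α / lam1 + γ * c₀ ^ α = c₀ ^ α * (γ + 1 / lam1) := by
          field_simp; ring
        linarith
    -- lower bound for the denominator
    set m : ℝ := lam * t₀ ^ α / 2 with hmdef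
    have hm0 : 0 < m := by positivity
    have hden : ∀ ξ ∈ Ioc (0:ℝ) (c₀ * t₀),
        m ^ 2 ≤ (-ξ * t₀ ^ (α - 1) + lam * γ * ξ ^ α * Real.cos (α * π) + lam * t₀ ^ α) ^ 2
          + (lam * γ * ξ ^ α * Real.sin (α * π)) ^ 2 := by
      intro ξ hξ
      obtain ⟨hξ0, hξc⟩ := hξ
      have hξα : 0 ≤ ξ ^ α := Real.rpow_nonneg hξ0.le α
      have hA : ξ * t₀ ^ (α - 1) ≤ c₀ * t₀ ^ α := by
        calc ξ * t₀ ^ (α - 1) ≤ (c₀ * t₀) * t₀ ^ (α - 1) := by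
              apply mul_le_mul_of_nonneg_right hξc htα1.le
          _ = c₀ * t₀ ^ α := by
              rw [mul_assoc]
              congr 1
              have h := Real.rpow_add ht₀0 1 (α - 1)
              rw [Real.rpow_one] at h
              rw [← h]
              congr 1
              ring
      have hB : lam * γ * ξ ^ α ≤ lam * γ * (c₀ ^ α * t₀ ^ α) := by
        have : ξ ^ α ≤ (c₀ * t₀) ^ α := Real.rpow_le_rpow hξ0.le hξc (le_of_lt hα0)
        rw [Real.mul_rpow hc₀.le ht₀0.le] at this
        exact mul_le_mul_of_nonneg_left this (by positivity)
      have hcos : -1 ≤ Real.cos (α * π) := Real.neg_one_le_cos _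
      have hf : m ≤ -ξ * t₀ ^ (α - 1) + lam * γ * ξ ^ α * Real.cos (α * π) + lam * t₀ ^ α := by
        have hBc : -(lam * γ * ξ ^ α) ≤ lam * γ * ξ ^ α * Real.cos (α * π) := by
          have hBpos : 0 ≤ lam * γ * ξ ^ α := by positivity
          nlinarith [mul_nonneg hBpos (show (0:ℝ) ≤ Real.cos (α * π) + 1 by linarith)]
        have hsumle : c₀ * t₀ ^ α + lam * γ * (c₀ ^ α * t₀ ^ α) ≤ lam * t₀ ^ α / 2 := by
          have h3 := mul_le_mul_of_nonneg_right hkey htα.le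
          have hl : (c₀ / lam + γ * c₀ ^ α) * t₀ ^ α * lam
              = (c₀ * t₀ ^ α + lam * γ * (c₀ ^ α * t₀ ^ α)) := by
            field_simp
          have h5 : c₀ * t₀ ^ α + lam * γ * (c₀ ^ α * t₀ ^ α) ≤ 1 / 2 * t₀ ^ α * lam := by
            rw [← hl]
            exact mul_le_mul_of_nonneg_right h3 hlam0.le
          nlinarith [h5]
        rw [hmdef]
        linarith [hA, hB, hBc, hsumle]
      nlinarith [sq_nonneg (lam * γ * ξ ^ α * Real.sin (α * π)),
        sq_nonneg (-ξ * t₀ ^ (α - 1) + lam * γ * ξ ^ α * Real.cos (α * π) + lam * t₀ ^ α - m)]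
    -- pointwise bound on the integrand
    set k : ℝ := 4 / (lam * (t₀ ^ α) ^ 2) with hkdef
    have hk0 : 0 < k := by positivity
    have hGIoc : IntegrableOn (fun x => Real.exp (-x) * x ^ α * (|Real.log x| + π))
        (Ioc (0:ℝ) (c₀ * t₀)) := hGint.mono_set Ioc_subset_Ioi_self
    have hbnd : |∫ ξ in Ioc (0:ℝ) (c₀ * t₀), Real.exp (-ξ) *
            (lam * ξ ^ α * (Real.log ξ * Real.sin (α * π) + π * Real.cos (α * π))) /
            ((-ξ * t₀ ^ (α - 1) + lam * γ * ξ ^ α * Real.cos (α * π) + lam * t₀ ^ α) ^ 2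
              + (lam * γ * ξ ^ α * Real.sin (α * π)) ^ 2)|
        ≤ ∫ ξ in Ioc (0:ℝ) (c₀ * t₀), k * (Real.exp (-ξ) * ξ ^ α * (|Real.log ξ| + π)) := by
      rw [← Real.norm_eq_abs]
      apply norm_integral_le_of_norm_le (hGIoc.const_mul k)
      filter_upwards [ae_restrict_mem measurableSet_Ioc] with ξ hξ
      obtain ⟨hξ0, hξc⟩ := hξ
      have hξα : 0 ≤ ξ ^ α := Real.rpow_nonneg hξ0.le α
      have he : 0 < Real.exp (-ξ) := Real.exp_pos _
      have hD := hden ξ ⟨hξ0, hξc⟩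
      set D : ℝ := (-ξ * t₀ ^ (α - 1) + lam * γ * ξ ^ α * Real.cos (α * π) + lam * t₀ ^ α) ^ 2
          + (lam * γ * ξ ^ α * Real.sin (α * π)) ^ 2 with hDdef
      have hD0 : 0 < D := lt_of_lt_of_le (by positivity) hD
      have hNum : |Real.exp (-ξ) *
          (lam * ξ ^ α * (Real.log ξ * Real.sin (α * π) + π * Real.cos (α * π)))|
          ≤ lam * (Real.exp (-ξ) * ξ ^ α * (|Real.log ξ| + π)) := by
        have htrig : |Real.log ξ * Real.sin (α * π) + π * Real.cos (α * π)|
            ≤ |Real.log ξ| + π := by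
          calc |Real.log ξ * Real.sin (α * π) + π * Real.cos (α * π)|
              ≤ |Real.log ξ * Real.sin (α * π)| + |π * Real.cos (α * π)| := abs_add_le _ _
            _ ≤ |Real.log ξ| + π := by
                rw [abs_mul, abs_mul, abs_of_pos hπ]
                have h1 := Real.abs_sin_le_one (α * π)
                have h2 := Real.abs_cos_le_one (α * π)
                have h3 := abs_nonneg (Real.log ξ)
                nlinarith
        rw [abs_mul, abs_mul, abs_of_pos he, abs_mul, abs_of_pos hlam0, abs_of_nonneg hξα]
        have hln0 : 0 ≤ |Real.log ξ| + π := by positivity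
        have hmm := mul_le_mul_of_nonneg_left htrig
          (show 0 ≤ Real.exp (-ξ) * (lam * ξ ^ α) by positivity)
        nlinarith [hmm]
      rw [Real.norm_eq_abs, abs_div, abs_of_pos hD0]
      calc |Real.exp (-ξ) *
          (lam * ξ ^ α * (Real.log ξ * Real.sin (α * π) + π * Real.cos (α * π)))| / D
          ≤ lam * (Real.exp (-ξ) * ξ ^ α * (|Real.log ξ| + π)) / m ^ 2 := by
            apply div_le_div₀ (by positivity) hNum (by positivity) hD
        _ = k * (Real.exp (-ξ) * ξ ^ α * (|Real.log ξ| + π)) := by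
            rw [hkdef, hmdef]
            field_simp
            ring
    have hIoc_le : (∫ ξ in Ioc (0:ℝ) (c₀ * t₀), Real.exp (-ξ) * ξ ^ α * (|Real.log ξ| + π)) ≤ J := by
      apply setIntegral_mono_set hGint
      · filter_upwards [ae_restrict_mem measurableSet_Ioi] with x hx
        have hx : (0:ℝ) < x := hx
        have h2 : 0 ≤ x ^ α := Real.rpow_nonneg hx.le α
        positivity
      · exact HasSubset.Subset.eventuallyLE Ioc_subset_Ioi_self
    have hstep : |∫ ξ in Ioc (0:ℝ) (c₀ * t₀), Real.exp (-ξ) *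
            (lam * ξ ^ α * (Real.log ξ * Real.sin (α * π) + π * Real.cos (α * π))) /
            ((-ξ * t₀ ^ (α - 1) + lam * γ * ξ ^ α * Real.cos (α * π) + lam * t₀ ^ α) ^ 2
              + (lam * γ * ξ ^ α * Real.sin (α * π)) ^ 2)| ≤ k * J := by
      refine hbnd.trans ?_
      rw [integral_const_mul]
      exact mul_le_mul_of_nonneg_left hIoc_le hk0.le
    -- assemble
    rw [abs_mul, abs_of_nonneg (by positivity : (0:ℝ) ≤ t₀ ^ (α - 1) * (γ / π))]
    calc t₀ ^ (α - 1) * (γ / π) * |∫ ξ in Ioc (0:ℝ) (c₀ * t₀), Real.exp (-ξ) *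
            (lam * ξ ^ α * (Real.log ξ * Real.sin (α * π) + π * Real.cos (α * π))) /
            ((-ξ * t₀ ^ (α - 1) + lam * γ * ξ ^ α * Real.cos (α * π) + lam * t₀ ^ α) ^ 2
              + (lam * γ * ξ ^ α * Real.sin (α * π)) ^ 2)|
        ≤ t₀ ^ (α - 1) * (γ / π) * (k * J) := by
          apply mul_le_mul_of_nonneg_left hstep (by positivity)
      _ = (4 * γ / (π * lam)) * t₀ ^ (-α - 1) * J := by
          have e : (t₀ ^ α) ^ 2 = t₀ ^ (α + α) := by
            rw [sq, ← Real.rpow_add ht₀0]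
          have e2 : t₀ ^ (α - 1) = t₀ ^ (-α - 1) * t₀ ^ (α + α) := by
            rw [← Real.rpow_add ht₀0]; ring_nf
          have hu : (0:ℝ) < t₀ ^ (α + α) := Real.rpow_pos_of_pos ht₀0 _
          rw [hkdef, e, e2]
          field_simp
  -- conclude
  refine ⟨⟨4 * γ / (π * lam1) * J + 1, by positivity, ?_⟩, main⟩
  intro lam t₀ hlam ht₀
  have hlam0 : 0 < lam := lt_of_lt_of_le hlam1 hlam
  have ht₀0 : 0 < t₀ := lt_of_lt_of_le one_pos ht₀
  have ht : 0 < t₀ ^ (-α - 1) := Real.rpow_pos_of_pos ht₀0 _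
  refine (main lam t₀ hlam ht₀).trans ?_
  have h1 : 4 * γ / (π * lam) ≤ 4 * γ / (π * lam1) := by gcongr
  have h2 : 4 * γ / (π * lam) * J ≤ (4 * γ / (π * lam1) * J + 1) := by
    nlinarith [mul_le_mul_of_nonneg_right h1 hJ0]
  calc 4 * γ / (π * lam) * t₀ ^ (-α - 1) * J
      = (4 * γ / (π * lam) * J) * t₀ ^ (-α - 1) := by ring
    _ ≤ (4 * γ / (π * lam1) * J + 1) * t₀ ^ (-α - 1) := by
        apply mul_le_mul_of_nonneg_right h2 ht.le
end

section
/- For γ > 0, λ > 0, α ∈ (0,1) and t₀ ≥ 1, define J_∞ = t₀^{α-1} ln t₀ · ∫_{c₀ t₀}^∞ e^{-ξ} b_{α,1}(λ, t₀, ξ) F(ξ, t₀, α)/(f² + g²) dξ. Then |J_∞| ≤ (C/λ) t₀^{-1} ln t₀ · e^{-c₀ t₀} + (C/λ³) t₀^{-2α-1} ln t₀ · Γ(3), for a constant C = C(γ, α) > 0; in particular, J_∞ = o(1) · (1/λ) t₀^{-α-1} ln t₀ as t₀ → ∞. -/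
/-!
With `h = λ t₀^α - ξ t₀^(α-1)` one has `f - h = λγξ^α cos(απ)`, so
`F = (f - h)² + g² - h² = (λγξ^α)² - h²`. Together with `f² + g² ≥ g²` this bounds the
integrand by `e^(-ξ) ((λγξ^α)² + h²) / (π g³)`. For `ξ > c₀ t₀` we have `g ≳ λ t₀^α` and
`h² ≤ λ² t₀^(2α) + ξ²`, so the integrand is at most `e^(-ξ) (C/(λ t₀^α) + C ξ²/(λ³ t₀^(3α)))`,
whose integral over `(c₀ t₀, ∞)` is at most `C/(λ t₀^α) e^(-c₀ t₀) + C/(λ³ t₀^(3α)) Γ(3)`.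
-/

open Real MeasureTheory Set Filter

theorem abs_div_mul_div_le_of_sub_sq_add_sq_eq {f g h r : ℝ} (hg : 0 < g)
    (hr : (f - h) ^ 2 + g ^ 2 = r ^ 2) :
    |g / (f ^ 2 + g ^ 2) * ((f ^ 2 + g ^ 2 - 2 * f * h) / (f ^ 2 + g ^ 2))|
      ≤ (r ^ 2 + h ^ 2) / g ^ 3 := by
  have hgD : g ^ 2 ≤ f ^ 2 + g ^ 2 := le_add_of_nonneg_left (sq_nonneg f)
  have hD : 0 < f ^ 2 + g ^ 2 := (pow_pos hg 2).trans_le hgD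
  have hF : f ^ 2 + g ^ 2 - 2 * f * h = r ^ 2 - h ^ 2 := by linear_combination hr
  have hFabs : |r ^ 2 - h ^ 2| ≤ r ^ 2 + h ^ 2 := by
    rw [abs_le]; constructor <;> nlinarith [sq_nonneg r, sq_nonneg h]
  calc |g / (f ^ 2 + g ^ 2) * ((f ^ 2 + g ^ 2 - 2 * f * h) / (f ^ 2 + g ^ 2))|
      = g * |r ^ 2 - h ^ 2| / (f ^ 2 + g ^ 2) ^ 2 := by
        rw [hF, abs_mul, abs_div, abs_div, abs_of_pos hg, abs_of_pos hD, div_mul_div_comm, ← sq]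
    _ ≤ g * (r ^ 2 + h ^ 2) / (g ^ 2) ^ 2 := by gcongr
    _ = (r ^ 2 + h ^ 2) / g ^ 3 := by field_simp

theorem exp_neg_mul_rpow_three_sub_one (x : ℝ) :
    exp (-x) * x ^ ((3 : ℝ) - 1) = exp (-x) * x ^ 2 := by
  rw [show (3 : ℝ) - 1 = (2 : ℕ) by norm_num, rpow_natCast]

theorem integrableOn_exp_neg_mul_sq_Ioi {a : ℝ} (ha : 0 ≤ a) :
    IntegrableOn (fun x : ℝ => exp (-x) * x ^ 2) (Ioi a) := by
  have h := GammaIntegral_convergent (s := 3) (by norm_num)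
  simp only [exp_neg_mul_rpow_three_sub_one] at h
  exact h.mono_set (Ioi_subset_Ioi ha)

theorem setIntegral_exp_neg_mul_sq_Ioi_le_Gamma_three {a : ℝ} (ha : 0 ≤ a) :
    ∫ x in Ioi a, exp (-x) * x ^ 2 ≤ Gamma 3 := by
  rw [Gamma_eq_integral (by norm_num)]
  simp only [exp_neg_mul_rpow_three_sub_one]
  exact setIntegral_mono_set (integrableOn_exp_neg_mul_sq_Ioi le_rfl)
    (ae_of_all _ fun x => by positivity) (Ioi_subset_Ioi ha).eventuallyLE

theorem abs_setIntegral_Ioi_le_of_abs_le_exp_neg_mul {φ : ℝ → ℝ} {a M₁ M₂ : ℝ} (ha : 0 ≤ a)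
    (hM₂ : 0 ≤ M₂) (hφ : ∀ x > a, |φ x| ≤ exp (-x) * (M₁ + M₂ * x ^ 2)) :
    |∫ x in Ioi a, φ x| ≤ M₁ * exp (-a) + M₂ * Gamma 3 := by
  have hexp := integrableOn_exp_neg_Ioi a
  have hexp_sq := integrableOn_exp_neg_mul_sq_Ioi ha
  calc |∫ x in Ioi a, φ x| ≤ ∫ x in Ioi a, |φ x| := abs_integral_le_integral_abs
    _ ≤ ∫ x in Ioi a, (M₁ * exp (-x) + M₂ * (exp (-x) * x ^ 2)) := by
        refine integral_mono_of_nonneg (ae_of_all _ fun x => abs_nonneg _)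
          ((hexp.const_mul M₁).add (hexp_sq.const_mul M₂)) ?_
        filter_upwards [self_mem_ae_restrict measurableSet_Ioi] with x hx
        linarith [hφ x hx]
    _ = M₁ * exp (-a) + M₂ * ∫ x in Ioi a, exp (-x) * x ^ 2 := by
        rw [integral_add (hexp.const_mul M₁) (hexp_sq.const_mul M₂), integral_const_mul,
          integral_const_mul, integral_exp_neg_Ioi]
    _ ≤ M₁ * exp (-a) + M₂ * Gamma 3 := by
        gcongr; exact setIntegral_exp_neg_mul_sq_Ioi_le_Gamma_three ha

namespace Jinfty

variable (γ lam α t₀ ξ : ℝ)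

noncomputable def g : ℝ := lam * γ * ξ ^ α * sin (α * π)

noncomputable def f : ℝ :=
  -ξ * t₀ ^ (α - 1) + lam * γ * ξ ^ α * cos (α * π) + lam * t₀ ^ α

noncomputable def h : ℝ := -ξ * t₀ ^ (α - 1) + lam * t₀ ^ α

noncomputable def b : ℝ := (1 / π) * g γ lam α ξ / (f γ lam α t₀ ξ ^ 2 + g γ lam α ξ ^ 2)

noncomputable def F : ℝ :=
  f γ lam α t₀ ξ ^ 2 + g γ lam α ξ ^ 2 - 2 * f γ lam α t₀ ξ * h lam α t₀ ξ

noncomputable def integrand : ℝ :=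
  exp (-ξ) * b γ lam α t₀ ξ * (F γ lam α t₀ ξ / (f γ lam α t₀ ξ ^ 2 + g γ lam α ξ ^ 2))

variable {γ lam α t₀ ξ} {c₀ : ℝ}

theorem sub_h_sq_add_g_sq : (f γ lam α t₀ ξ - h lam α t₀ ξ) ^ 2 + g γ lam α ξ ^ 2
    = (lam * γ * ξ ^ α) ^ 2 := by
  unfold f g h
  linear_combination (lam * γ * ξ ^ α) ^ 2 * sin_sq_add_cos_sq (α * π)

theorem h_sq_le (hα : α ≤ 1) (ht₀ : 1 ≤ t₀) (hξ : 0 ≤ ξ) (hlam : 0 ≤ lam) :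
    h lam α t₀ ξ ^ 2 ≤ lam ^ 2 * (t₀ ^ α) ^ 2 + ξ ^ 2 := by
  have hu₀ : 0 ≤ t₀ ^ (α - 1) := rpow_nonneg (by linarith) _
  have hu₁ : t₀ ^ (α - 1) ≤ 1 := rpow_le_one_of_one_le_of_nonpos ht₀ (by linarith)
  have hv : 0 ≤ t₀ ^ α := rpow_nonneg (by linarith) _
  unfold h
  nlinarith [mul_nonneg hξ hu₀, mul_nonneg hlam hv, mul_le_mul_of_nonneg_left hu₁ hξ]

theorem le_g (hγ : 0 ≤ γ) (hlam : 0 ≤ lam) (hα : α ∈ Ioo (0 : ℝ) 1) (hc₀ : 0 ≤ c₀)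
    (ht₀ : 0 ≤ t₀) (hξ : c₀ * t₀ ≤ ξ) :
    sin (α * π) * γ * c₀ ^ α * (lam * t₀ ^ α) ≤ g γ lam α ξ := by
  have hs : 0 ≤ sin (α * π) := sin_nonneg_of_nonneg_of_le_pi (by nlinarith [pi_pos, hα.1])
    (by nlinarith [pi_pos, hα.2])
  have : c₀ ^ α * t₀ ^ α ≤ ξ ^ α := by
    rw [← mul_rpow hc₀ ht₀]; exact rpow_le_rpow (mul_nonneg hc₀ ht₀) hξ hα.1.le
  unfold g
  calc sin (α * π) * γ * c₀ ^ α * (lam * t₀ ^ α)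
      = lam * γ * (c₀ ^ α * t₀ ^ α) * sin (α * π) := by ring
    _ ≤ lam * γ * ξ ^ α * sin (α * π) := by gcongr

theorem exists_abs_integrand_le (hγ : 0 < γ) (hlam : 0 < lam) (hα : α ∈ Ioo (0 : ℝ) 1)
    (hc₀ : 0 < c₀) :
    ∃ C > 0, ∀ t₀ ≥ 1, ∀ ξ > c₀ * t₀, |integrand γ lam α t₀ ξ|
      ≤ exp (-ξ) * (C / (lam * t₀ ^ α) + C / (lam ^ 3 * (t₀ ^ α) ^ 3) * ξ ^ 2) := by
  set s := sin (α * π) with hs_def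
  have hs : 0 < s := sin_pos_of_pos_of_lt_pi (by nlinarith [pi_pos, hα.1])
    (by nlinarith [pi_pos, hα.2])
  set ρ := s * γ * c₀ ^ α
  have hρ : 0 < ρ := by positivity
  refine ⟨(1 / (s ^ 2 * ρ) + 1 / ρ ^ 3) / π, by positivity, fun t₀ ht₀ ξ hξ => ?_⟩
  have hξ₀ : 0 ≤ ξ := by nlinarith
  set m := lam * t₀ ^ α
  have hm : 0 < m := mul_pos hlam (rpow_pos_of_pos (by linarith) _)
  have hρm : ρ * m ≤ g γ lam α ξ := le_g hγ.le hlam.le hα hc₀.le (by linarith) hξ.le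
  have hg : 0 < g γ lam α ξ := (mul_pos hρ hm).trans_le hρm
  have hr : (lam * γ * ξ ^ α) ^ 2 = g γ lam α ξ ^ 2 / s ^ 2 := by
    unfold g; rw [← hs_def]; field_simp
  have hh : h lam α t₀ ξ ^ 2 ≤ m ^ 2 + ξ ^ 2 := by
    rw [mul_pow]; exact h_sq_le hα.2.le ht₀ hξ₀ hlam.le
  have hbF := abs_div_mul_div_le_of_sub_sq_add_sq_eq hg (sub_h_sq_add_g_sq (t₀ := t₀))
  have hrewrite : integrand γ lam α t₀ ξ = exp (-ξ) * (1 / π *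
      (g γ lam α ξ / (f γ lam α t₀ ξ ^ 2 + g γ lam α ξ ^ 2) * (F γ lam α t₀ ξ
        / (f γ lam α t₀ ξ ^ 2 + g γ lam α ξ ^ 2)))) := by
    unfold integrand b; ring
  rw [hrewrite, abs_mul, abs_mul, abs_of_pos (exp_pos _), abs_of_pos (by positivity),
    show lam ^ 3 * (t₀ ^ α) ^ 3 = m ^ 3 by ring]
  gcongr exp (-ξ) * ?_
  calc 1 / π * |g γ lam α ξ / (f γ lam α t₀ ξ ^ 2 + g γ lam α ξ ^ 2) *
        (F γ lam α t₀ ξ / (f γ lam α t₀ ξ ^ 2 + g γ lam α ξ ^ 2))|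
      ≤ 1 / π * ((g γ lam α ξ ^ 2 / s ^ 2 + (m ^ 2 + ξ ^ 2)) / g γ lam α ξ ^ 3) := by
        rw [← hr]; gcongr; exact hbF.trans (by gcongr)
    _ = 1 / π * (1 / (s ^ 2 * g γ lam α ξ) + m ^ 2 / g γ lam α ξ ^ 3
          + ξ ^ 2 / g γ lam α ξ ^ 3) := by
        field_simp; ring
    _ ≤ 1 / π * (1 / (s ^ 2 * (ρ * m)) + m ^ 2 / (ρ * m) ^ 3 + ξ ^ 2 / (ρ * m) ^ 3) := by
        gcongr
    _ = (1 / (s ^ 2 * ρ) + 1 / ρ ^ 3) / π / m + 1 / ρ ^ 3 / π / m ^ 3 * ξ ^ 2 := by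
        field_simp
    _ ≤ (1 / (s ^ 2 * ρ) + 1 / ρ ^ 3) / π / m
          + (1 / (s ^ 2 * ρ) + 1 / ρ ^ 3) / π / m ^ 3 * ξ ^ 2 := by
        gcongr; exact le_add_of_nonneg_left (by positivity)

theorem exists_abs_le (hγ : 0 < γ) (hlam : 0 < lam) (hα : α ∈ Ioo (0 : ℝ) 1) (hc₀ : 0 < c₀) :
    ∃ C > 0, ∀ t₀ : ℝ, 1 ≤ t₀ →
      |t₀ ^ (α - 1) * log t₀ * ∫ ξ in Ioi (c₀ * t₀), integrand γ lam α t₀ ξ|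
        ≤ (C / lam) * t₀⁻¹ * log t₀ * exp (-(c₀ * t₀))
          + (C / lam ^ 3) * t₀ ^ (-2 * α - 1) * log t₀ * Gamma 3 := by
  obtain ⟨C, hC, hbound⟩ := exists_abs_integrand_le hγ hlam hα hc₀
  refine ⟨C, hC, fun t₀ ht₀ => ?_⟩
  have ht₀' : 0 < t₀ := by linarith
  have hI := abs_setIntegral_Ioi_le_of_abs_le_exp_neg_mul (by positivity)
    (by positivity) (hbound t₀ ht₀)
  have e₁ : t₀ ^ (α - 1) * (C / (lam * t₀ ^ α)) = C / lam * t₀⁻¹ := by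
    rw [rpow_sub_one ht₀'.ne']; field_simp
  have e₃ : t₀ ^ (α - 1) * (C / (lam ^ 3 * (t₀ ^ α) ^ 3)) = C / lam ^ 3 * t₀ ^ (-2 * α - 1) := by
    rw [show α - 1 = α * (3 : ℕ) + (-2 * α - 1) by push_cast; ring, rpow_add ht₀',
      rpow_mul_natCast ht₀'.le]
    field_simp
  rw [abs_mul, abs_mul, abs_of_pos (rpow_pos_of_pos ht₀' _), abs_of_nonneg (log_nonneg ht₀)]
  calc t₀ ^ (α - 1) * log t₀ * |∫ ξ in Ioi (c₀ * t₀), integrand γ lam α t₀ ξ|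
      ≤ t₀ ^ (α - 1) * log t₀ * (C / (lam * t₀ ^ α) * exp (-(c₀ * t₀))
          + C / (lam ^ 3 * (t₀ ^ α) ^ 3) * Gamma 3) := by
        exact mul_le_mul_of_nonneg_left hI
          (mul_nonneg (rpow_nonneg ht₀'.le _) (log_nonneg ht₀))
    _ = _ := by
        linear_combination (log t₀ * exp (-(c₀ * t₀))) * e₁ + (log t₀ * Gamma 3) * e₃

end Jinfty

theorem tendsto_div_rpow_mul_log_of_abs_le {J : ℝ → ℝ} {lam α c₀ C : ℝ} (hlam : 0 < lam)
    (hα : 0 < α) (hc₀ : 0 < c₀) (hJ : ∀ t₀ : ℝ, 1 ≤ t₀ →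
      |J t₀| ≤ (C / lam) * t₀⁻¹ * log t₀ * exp (-(c₀ * t₀))
        + (C / lam ^ 3) * t₀ ^ (-2 * α - 1) * log t₀ * Gamma 3) :
    Tendsto (fun t₀ => J t₀ / ((1 / lam) * t₀ ^ (-α - 1) * log t₀)) atTop (nhds 0) := by
  have hlim : Tendsto (fun t₀ : ℝ => C * (t₀ ^ α * exp (-c₀ * t₀))
      + C * Gamma 3 / lam ^ 2 * t₀ ^ (-α)) atTop (nhds 0) := by
    simpa using ((tendsto_rpow_mul_exp_neg_mul_atTop_nhds_zero α c₀ hc₀).const_mul C).add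
      ((tendsto_rpow_neg_atTop hα).const_mul (C * Gamma 3 / lam ^ 2))
  refine squeeze_zero_norm' ?_ hlim
  filter_upwards [eventually_gt_atTop 1] with t₀ ht₀
  have ht₀' : 0 < t₀ := by linarith
  have hd : 0 < (1 / lam) * t₀ ^ (-α - 1) * log t₀ := by
    have := log_pos ht₀; positivity
  rw [norm_div, Real.norm_eq_abs, Real.norm_eq_abs, abs_of_pos hd, div_le_iff₀ hd]
  refine (hJ t₀ ht₀.le).trans_eq ?_
  have e₁ : t₀ ^ α * t₀ ^ (-α - 1) = t₀⁻¹ := by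
    rw [← rpow_add ht₀', show α + (-α - 1) = -1 by ring, rpow_neg_one]
  have e₂ : t₀ ^ (-α) * t₀ ^ (-α - 1) = t₀ ^ (-2 * α - 1) := by
    rw [← rpow_add ht₀']; ring_nf
  rw [← e₁, ← e₂, neg_mul]
  field_simp

/-- Estimate of the tail integral `J_∞`, and the consequence
`J_∞ = o((1/λ) t₀^{-α-1} ln t₀)` as `t₀ → ∞`. -/
theorem Jinfty_estimate (γ lam α c₀ : ℝ)
    (hγ : 0 < γ) (hlam : 0 < lam) (hα : α ∈ Ioo (0:ℝ) 1) (hc₀ : 0 < c₀) :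
    (∃ C : ℝ, 0 < C ∧ ∀ t₀ : ℝ, 1 ≤ t₀ →
      |t₀ ^ (α - 1) * Real.log t₀ *
          ∫ ξ in Ioi (c₀ * t₀), Real.exp (-ξ) *
            ((1 / π) * (lam * γ * ξ ^ α * Real.sin (α * π)) /
              ((-ξ * t₀ ^ (α - 1) + lam * γ * ξ ^ α * Real.cos (α * π) + lam * t₀ ^ α) ^ 2
                + (lam * γ * ξ ^ α * Real.sin (α * π)) ^ 2)) *
            (((-ξ * t₀ ^ (α - 1) + lam * γ * ξ ^ α * Real.cos (α * π) + lam * t₀ ^ α) ^ 2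
                + (lam * γ * ξ ^ α * Real.sin (α * π)) ^ 2
                - 2 * (-ξ * t₀ ^ (α - 1) + lam * γ * ξ ^ α * Real.cos (α * π) + lam * t₀ ^ α)
                    * (-ξ * t₀ ^ (α - 1) + lam * t₀ ^ α)) /
              ((-ξ * t₀ ^ (α - 1) + lam * γ * ξ ^ α * Real.cos (α * π) + lam * t₀ ^ α) ^ 2
                + (lam * γ * ξ ^ α * Real.sin (α * π)) ^ 2))|
        ≤ (C / lam) * t₀⁻¹ * Real.log t₀ * Real.exp (-(c₀ * t₀))
            + (C / lam ^ 3) * t₀ ^ (-2 * α - 1) * Real.log t₀ * Real.Gamma 3) ∧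
    Tendsto (fun t₀ : ℝ =>
      (t₀ ^ (α - 1) * Real.log t₀ *
          ∫ ξ in Ioi (c₀ * t₀), Real.exp (-ξ) *
            ((1 / π) * (lam * γ * ξ ^ α * Real.sin (α * π)) /
              ((-ξ * t₀ ^ (α - 1) + lam * γ * ξ ^ α * Real.cos (α * π) + lam * t₀ ^ α) ^ 2
                + (lam * γ * ξ ^ α * Real.sin (α * π)) ^ 2)) *
            (((-ξ * t₀ ^ (α - 1) + lam * γ * ξ ^ α * Real.cos (α * π) + lam * t₀ ^ α) ^ 2
                + (lam * γ * ξ ^ α * Real.sin (α * π)) ^ 2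
                - 2 * (-ξ * t₀ ^ (α - 1) + lam * γ * ξ ^ α * Real.cos (α * π) + lam * t₀ ^ α)
                    * (-ξ * t₀ ^ (α - 1) + lam * t₀ ^ α)) /
              ((-ξ * t₀ ^ (α - 1) + lam * γ * ξ ^ α * Real.cos (α * π) + lam * t₀ ^ α) ^ 2
                + (lam * γ * ξ ^ α * Real.sin (α * π)) ^ 2)))
        / ((1 / lam) * t₀ ^ (-α - 1) * Real.log t₀)) atTop (nhds 0) := by
  obtain ⟨C, hC, hJ⟩ := Jinfty.exists_abs_le hγ hlam hα hc₀
  exact ⟨⟨C, hC, hJ⟩, tendsto_div_rpow_mul_log_of_abs_le hlam hα.1 hc₀ hJ⟩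
end
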